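/- Let k ≥ 5 and let G be a planar graph on vertex set {u₁, u₂} ∪ B with every vertex of B adjacent to both u₁ and u₂, such that G contains no member of Θ_k as a subgraph. If G[B] is a disjoint union of paths with two longest path orders n₁ ≥ n₂, then n₁ + n₂ ≤ k−3. -/

import Mathlib

open SimpleGraph

/-- The adjacency spectral radius of a finite simple graph. -/
noncomputable def specRad {V : Type*} [Fintype V] [DecidableEq V] (G : SimpleGraph V) : ℝ :=
  letI := Classical.decRel G.Adj
  sSup ((fun μ : ℝ => |μ|) '' spectrum ℝ (G.adjMatrix ℝ))

/-- `G` contains a copy of `H` as a subgraph. -/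
def Contains {V W : Type*} (G : SimpleGraph V) (H : SimpleGraph W) : Prop :=
  ∃ f : W ↪ V, ∀ a b, H.Adj a b → G.Adj (f a) (f b)

/-- `G` contains `C_{l,l}`: two cycles of length `l` sharing exactly one vertex. -/
def ContainsCll {V : Type*} (G : SimpleGraph V) (l : ℕ) : Prop :=
  ∃ (u : V) (c₁ c₂ : G.Walk u u), c₁.IsCycle ∧ c₂.IsCycle ∧ c₁.length = l ∧ c₂.length = l ∧
    ∀ v, v ∈ c₁.support → v ∈ c₂.support → v = u

/-- Theta graph on `k` vertices: the cycle `0,1,…,k-1` plus a chord from `0` to `a`. -/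
def thetaGraph (k a : ℕ) : SimpleGraph (Fin k) :=
  SimpleGraph.fromRel (fun i j =>
    (j : ℕ) = (i : ℕ) + 1 ∨ ((i : ℕ) = k - 1 ∧ (j : ℕ) = 0) ∨ ((i : ℕ) = 0 ∧ (j : ℕ) = a))

/-- `G` contains some member of `Θ_k`, the set of Theta graphs on `k` vertices. -/
def ContainsTheta {V : Type*} (G : SimpleGraph V) (k : ℕ) : Prop :=
  ∃ a, 2 ≤ a ∧ a ≤ k - 2 ∧ Contains G (thetaGraph k a)

/-- The join of two graphs: all edges between the two vertex sets are added. -/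
def joinG {V W : Type*} (G : SimpleGraph V) (H : SimpleGraph W) : SimpleGraph (V ⊕ W) where
  Adj a b := match a, b with
    | Sum.inl a, Sum.inl b => G.Adj a b
    | Sum.inr a, Sum.inr b => H.Adj a b
    | Sum.inl _, Sum.inr _ => True
    | Sum.inr _, Sum.inl _ => True
  symm := by
    refine ⟨?_⟩
    rintro (a | a) (b | b) h
    · exact G.adj_symm h
    · trivial
    · trivial
    · exact H.adj_symm h
  loopless := by
    refine ⟨?_⟩
    rintro (a | a) h
    · exact G.irrefl h
    · exact H.irrefl h

/-- The disjoint union of `t` paths, the `i`-th having `f i` vertices. -/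
def pathsUnion (t : ℕ) (f : ℕ → ℕ) : SimpleGraph (Σ i : Fin t, Fin (f i.1)) where
  Adj a b := a.1 = b.1 ∧ ((a.2 : ℕ) + 1 = (b.2 : ℕ) ∨ (b.2 : ℕ) + 1 = (a.2 : ℕ))
  symm := by
    refine ⟨?_⟩
    rintro ⟨i, a⟩ ⟨j, b⟩ ⟨h₁, h₂⟩
    exact ⟨h₁.symm, h₂.symm⟩
  loopless := by
    refine ⟨?_⟩
    rintro ⟨i, a⟩ ⟨-, h⟩
    omega

/-- `H` is a minor of `G`: disjoint connected branch sets, one for each vertex of `H`,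
with edges of `G` between branch sets corresponding to edges of `H`. -/
def IsMinor {V W : Type*} (H : SimpleGraph W) (G : SimpleGraph V) : Prop :=
  ∃ B : W → Set V, (∀ w, (B w).Nonempty) ∧ (∀ w, (G.induce (B w)).Connected) ∧
    (∀ w₁ w₂, w₁ ≠ w₂ → Disjoint (B w₁) (B w₂)) ∧
    ∀ w₁ w₂, H.Adj w₁ w₂ → ∃ v₁ ∈ B w₁, ∃ v₂ ∈ B w₂, G.Adj v₁ v₂

/-- Planarity via Wagner's theorem: no `K₅` minor and no `K₃,₃` minor. -/
def IsPlanar {V : Type*} (G : SimpleGraph V) : Prop :=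
  ¬ IsMinor (⊤ : SimpleGraph (Fin 5)) G ∧
  ¬ IsMinor (completeBipartiteGraph (Fin 3) (Fin 3)) G

/-! Two disjoint paths `P`, `Q` in `B` of orders `a + b = k - 2`, each of whose vertices is
joined to both `u₁` and `u₂`, close up into the `k`-cycle `u₁ P u₂ Q u₁`. Taking `P` to be the
path with at least two vertices, the edge from `u₁` to the second vertex of `P` is a chord of
this cycle, so the cycle together with it is a member of `Θ_k`. -/

section

variable {V : Type*} {G : SimpleGraph V}

theorem containsTheta_of_isChain_cycle {l : List V} {a : ℕ} (hnd : l.Nodup)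
    (hcyc : (l ++ l.take 1).IsChain G.Adj) (ha : 2 ≤ a) (hac : a + 2 ≤ l.length)
    (hchord : G.Adj l[0] l[a]) : ContainsTheta G l.length := by
  have hstep : ∀ i j (hi : i < l.length) (hj : j < l.length),
      (j = i + 1 ∨ (i = l.length - 1 ∧ j = 0) ∨ (i = 0 ∧ j = a)) → G.Adj l[i] l[j] := by
    rintro i j hi hj (rfl | ⟨rfl, rfl⟩ | ⟨rfl, rfl⟩)
    · have h := hcyc.getElem i (by simp; omega)
      rwa [List.getElem_append_left hi, List.getElem_append_left hj] at h
    · have h := hcyc.getElem (l.length - 1) (by simp; omega)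
      rw [List.getElem_append_left hi, List.getElem_append_right (by omega)] at h
      simpa [Nat.sub_add_cancel hj] using h
    · exact hchord
  refine ⟨a, ha, by omega, ⟨fun i => l[i], List.nodup_iff_injective_get.mp hnd⟩, ?_⟩
  rintro i j ⟨-, hij | hji⟩
  · exact hstep i j i.2 j.2 hij
  · exact (hstep j i j.2 i.2 hji).symm

theorem containsTheta_of_paths_between {u₁ u₂ : V} {P Q : List V} (hu : u₁ ≠ u₂)
    (hPQ : (P ++ Q).Nodup) (hP : P.IsChain G.Adj) (hQ : Q.IsChain G.Adj)
    (hu₁ : ∀ v ∈ P ++ Q, G.Adj u₁ v) (hu₂ : ∀ v ∈ P ++ Q, G.Adj u₂ v)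
    (hPlen : 2 ≤ P.length) (hQ₀ : Q ≠ []) : ContainsTheta G (P.length + Q.length + 2) := by
  have hu₁' : u₁ ∉ P ++ Q := fun h => G.loopless.irrefl u₁ (hu₁ u₁ h)
  have hu₂' : u₂ ∉ P ++ Q := fun h => G.loopless.irrefl u₂ (hu₂ u₂ h)
  have hP₀ : P ≠ [] := List.ne_nil_of_length_pos (by omega)
  have := containsTheta_of_isChain_cycle (G := G) (l := u₁ :: (P ++ u₂ :: Q)) (a := 2)
    ?_ ?_ le_rfl (by simp; omega) ?_
  · simpa [add_assoc, add_comm, add_left_comm] using this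
  · simp only [List.mem_append, not_or] at hu₁' hu₂'
    simp only [List.nodup_cons, List.nodup_append, List.mem_append, List.mem_cons] at hPQ ⊢
    grind
  · simp only [List.mem_append] at hu₁ hu₂
    simp only [List.take_succ_cons, List.take_zero, List.cons_append, List.append_assoc,
      List.isChain_cons, List.head?_append_of_ne_nil _ hP₀, Option.mem_def, List.isChain_append,
      hP, List.head?_append, List.head?_cons, Option.or_some, Option.some.injEq, forall_eq', hQ,
      List.head?_nil, reduceCtorEq, IsEmpty.forall_iff, implies_true, List.IsChain.nil, and_self,
      true_and]
    refine ⟨fun y hy => hu₁ y (.inl (List.mem_of_mem_head? hy)), ⟨?_, fun x hx =>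
      (hu₁ x (.inr (List.mem_of_mem_getLast? hx))).symm⟩, fun x hx =>
      (hu₂ x (.inl (List.mem_of_mem_getLast? hx))).symm⟩
    rw [List.head?_eq_some_head hQ₀, Option.getD_some]
    exact hu₂ _ (.inr (List.head_mem hQ₀))
  · simp only [List.getElem_cons_zero, List.getElem_cons_succ,
      List.getElem_append_left (show 1 < P.length by omega)]
    exact hu₁ _ (List.mem_append_left _ (List.getElem_mem _))

section pathList

variable {t : ℕ} {f : ℕ → ℕ} (g : (Σ i : Fin t, Fin (f i.1)) ↪ V)

def pathList (i : Fin t) : List V :=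
  List.ofFn fun j : Fin (f i) => g ⟨i, j⟩

theorem length_pathList (i : Fin t) : (pathList g i).length = f i :=
  List.length_ofFn

theorem mem_pathList {i : Fin t} {v : V} : v ∈ pathList g i ↔ ∃ j, g ⟨i, j⟩ = v :=
  List.mem_ofFn

theorem nodup_pathList_append {i j : Fin t} (hij : i ≠ j) :
    (pathList g i ++ pathList g j).Nodup := by
  refine List.nodup_append.mpr ⟨?_, ?_, ?_⟩
  · exact List.nodup_ofFn.mpr fun x y h => by simpa using g.injective h
  · exact List.nodup_ofFn.mpr fun x y h => by simpa using g.injective h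
  · simp only [mem_pathList]
    rintro _ ⟨x, rfl⟩ _ ⟨y, rfl⟩ h
    exact hij (congrArg Sigma.fst (g.injective h))

theorem isChain_pathList (hg : ∀ a b, (pathsUnion t f).Adj a b → G.Adj (g a) (g b))
    (i : Fin t) : (pathList g i).IsChain G.Adj :=
  List.isChain_ofFn.mpr fun _ _ => hg _ _ ⟨rfl, .inl rfl⟩

end pathList

theorem containsTheta_of_contains_pathsUnion {s : Set V} {u₁ u₂ : V} (hu : u₁ ≠ u₂)
    (hu₁ : ∀ v ∈ s, G.Adj u₁ v) (hu₂ : ∀ v ∈ s, G.Adj u₂ v) {f : ℕ → ℕ}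
    (hf₀ : 1 ≤ f 0) (hf₁ : 1 ≤ f 1) (hf : 3 ≤ f 0 + f 1)
    (h : Contains (G.induce s) (pathsUnion 2 f)) : ContainsTheta G (f 0 + f 1 + 2) := by
  obtain ⟨g, hg⟩ := h
  let g' := g.trans (Function.Embedding.subtype s)
  have hmem : ∀ i, ∀ v ∈ pathList g' i, v ∈ s := by
    rintro i v hv
    obtain ⟨j, rfl⟩ := (mem_pathList g').mp hv
    exact (g ⟨i, j⟩).2
  have hmem₂ : ∀ i j, ∀ v ∈ pathList g' i ++ pathList g' j, v ∈ s := fun i j v hv =>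
    (List.mem_append.mp hv).elim (hmem i v) (hmem j v)
  have htheta : ∀ i j : Fin 2, i ≠ j → 2 ≤ (pathList g' i).length → (pathList g' j) ≠ [] →
      ContainsTheta G ((pathList g' i).length + (pathList g' j).length + 2) :=
    fun i j hij hi hj => containsTheta_of_paths_between hu (nodup_pathList_append g' hij)
      (isChain_pathList g' hg i) (isChain_pathList g' hg j)
      (fun v hv => hu₁ v (hmem₂ i j v hv)) (fun v hv => hu₂ v (hmem₂ i j v hv)) hi hj
  have h₀ : (pathList g' 0).length = f 0 := length_pathList g' 0
  have h₁ : (pathList g' 1).length = f 1 := length_pathList g' 1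
  rcases le_or_gt 2 (f 0) with h2 | h1
  · simpa [h₀, h₁] using htheta 0 1 (by decide) (by omega) (List.ne_nil_of_length_pos (by omega))
  · simpa [h₀, h₁, add_comm] using
      htheta 1 0 (by decide) (by omega) (List.ne_nil_of_length_pos (by omega))

end

theorem stmt14_general (k : ℕ) (hk : 5 ≤ k) {B : Type*}
    (G : SimpleGraph (Fin 2 ⊕ B))
    (hspan : ∀ (i : Fin 2) (v : B), G.Adj (Sum.inl i) (Sum.inr v))
    (hfree : ¬ ContainsTheta G k) :
    ∀ a b : ℕ, 1 ≤ a → 1 ≤ b → a + b = k - 2 →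
      ¬ Contains (G.induce (Set.range Sum.inr))
        (pathsUnion 2 (fun i => if i = 0 then a else b)) := by
  intro a b ha hb hab h
  have hhub : ∀ u, ∀ v ∈ Set.range (Sum.inr : B → Fin 2 ⊕ B), G.Adj (Sum.inl u) v := by
    rintro u _ ⟨w, rfl⟩
    exact hspan u w
  apply hfree
  simpa [show k = a + b + 2 by omega] using
    containsTheta_of_contains_pathsUnion (by simp) (hhub 0) (hhub 1)
      (f := fun i => if i = 0 then a else b) (by simpa) (by simpa) (by simp; omega) h

theorem stmt14 (k : ℕ) (hk : 5 ≤ k) {B : Type*} [Fintype B]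
    (G : SimpleGraph (Fin 2 ⊕ B)) (hpl : IsPlanar G)
    (hcard : k - 1 ≤ Fintype.card B)
    (hspan : ∀ (i : Fin 2) (v : B), G.Adj (Sum.inl i) (Sum.inr v))
    (hfree : ¬ ContainsTheta G k)
    (hacyc : (G.induce (Set.range Sum.inr)).IsAcyclic)
    (hdeg : ∀ v : B, {w : B | G.Adj (Sum.inr v) (Sum.inr w)}.ncard ≤ 2) :
    ∀ a b : ℕ, 1 ≤ a → 1 ≤ b → a + b = k - 2 →
      ¬ Contains (G.induce (Set.range Sum.inr))
        (pathsUnion 2 (fun i => if i = 0 then a else b)) :=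
  stmt14_general k hk G hspan hfree
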